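/- arXiv:1305.6626 — 5 statements merged into one kernel-verified Lean document; each statement's English description precedes it below -/
import Mathlib

section
/- Let α be a finite type, let Ω be a finite probability space with probability mass function P, let X : Ω → α be a random variable, let 0 ≤ δ and 2δ ≤ ε ≤ 1, and let T ⊆ Ω be an event with P(T) ≥ 1 − δ > 0. Let p be the distribution of X under P and let p_T be the distribution of X under P conditioned on T (i.e. p_T(a) = P({ω ∈ T : X ω = a})/P(T)). Then H∞^{ε−2δ}(p_T) ≤ H∞^{ε}(p). -/
open Finset

/-- `p` is a probability distribution on the finite type `α`. -/
def IsDist {α : Type*} [Fintype α] (p : α → ℝ) : Prop :=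
  (∀ a, 0 ≤ p a) ∧ ∑ a, p a = 1

/-- Statistical (total variation) distance between two distributions. -/
noncomputable def statDist {α : Type*} [Fintype α] (p q : α → ℝ) : ℝ :=
  (∑ a, |p a - q a|) / 2

/-- Min-entropy `H∞(p) = -log₂ (max_a p a)`. -/
noncomputable def minEntropy {α : Type*} [Fintype α] (p : α → ℝ) : ℝ :=
  - Real.logb 2 (⨆ a, p a)

/-- `ε`-smooth min-entropy: supremum of `H∞(q)` over distributions `q`
within statistical distance `ε` of `p`. -/
noncomputable def smoothMinEntropy {α : Type*} [Fintype α] (ε : ℝ) (p : α → ℝ) : ℝ :=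
  sSup {h : ℝ | ∃ q : α → ℝ, IsDist q ∧ statDist q p ≤ ε ∧ h = minEntropy q}

/-!
Conditioning on `T` moves the distribution of `X` by at most `1 - P(T) ≤ δ` in statistical
distance. So by the triangle inequality every distribution that is `(ε - 2δ)`-close to the
conditioned distribution is `ε`-close to the original one, and the supremum defining the left
side is taken over a subset of the one defining the right side.
-/

section Distributions

variable {α : Type*} [Fintype α]

lemma statDist_self (p : α → ℝ) : statDist p p = 0 := by
  simp [statDist]

lemma statDist_triangle (p q r : α → ℝ) : statDist p r ≤ statDist p q + statDist q r := by
  unfold statDist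
  rw [← add_div, ← sum_add_distrib]
  gcongr with a
  exact abs_sub_le _ _ _

lemma minEntropy_le_logb_card {q : α → ℝ} (hq : IsDist q) :
    minEntropy q ≤ Real.logb 2 (Fintype.card α) := by
  have : Nonempty α := by
    by_contra h
    simpa [not_nonempty_iff.mp h] using hq.2
  have hcard : (0 : ℝ) < Fintype.card α := by exact_mod_cast Fintype.card_pos
  -- some atom carries at least the average mass `1 / |α|`
  obtain ⟨a, -, ha⟩ : ∃ a ∈ univ, 1 / (Fintype.card α : ℝ) ≤ q a := by
    refine exists_le_of_sum_le univ_nonempty ?_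
    rw [hq.2, sum_const, card_univ, nsmul_eq_mul]
    field_simp
    exact le_rfl
  have hmax : 1 / (Fintype.card α : ℝ) ≤ ⨆ b, q b :=
    ha.trans (le_ciSup (Set.finite_range q).bddAbove a)
  calc minEntropy q ≤ -Real.logb 2 (1 / Fintype.card α) :=
        neg_le_neg (Real.logb_le_logb_of_le (by norm_num) (by positivity) hmax)
    _ = Real.logb 2 (Fintype.card α) := by rw [one_div, Real.logb_inv, neg_neg]

lemma bddAbove_smoothMinEntropy_set (ε : ℝ) (p : α → ℝ) :
    BddAbove {h : ℝ | ∃ q : α → ℝ, IsDist q ∧ statDist q p ≤ ε ∧ h = minEntropy q} := by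
  refine ⟨Real.logb 2 (Fintype.card α), ?_⟩
  rintro _ ⟨q, hq, -, rfl⟩
  exact minEntropy_le_logb_card hq

lemma smoothMinEntropy_le_of_statDist_le {p p' : α → ℝ} {ε ε' : ℝ} (hp' : IsDist p')
    (hε' : 0 ≤ ε') (h : ε' + statDist p' p ≤ ε) :
    smoothMinEntropy ε' p' ≤ smoothMinEntropy ε p := by
  refine csSup_le_csSup (bddAbove_smoothMinEntropy_set ε p)
    ⟨minEntropy p', p', hp', by rwa [statDist_self], rfl⟩ ?_
  rintro _ ⟨q, hq, hqp', rfl⟩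
  exact ⟨q, hq, (statDist_triangle q p' p).trans (by linarith), rfl⟩

lemma isDist_div_sum {u : α → ℝ} (hu : ∀ a, 0 ≤ u a) (hpos : 0 < ∑ a, u a) :
    IsDist fun a => u a / ∑ b, u b :=
  ⟨fun a => div_nonneg (hu a) hpos.le, by rw [← sum_div, div_self hpos.ne']⟩

lemma statDist_div_sum_le {u v : α → ℝ} (hu : ∀ a, 0 ≤ u a) (hv : ∀ a, 0 ≤ v a)
    (hsum : ∑ a, u a + ∑ a, v a = 1) (hpos : 0 < ∑ a, u a) :
    statDist (fun a => u a / ∑ b, u b) (u + v) ≤ ∑ a, v a := by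
  set s := ∑ a, u a
  have hratio : 0 ≤ (1 - s) / s := by
    refine div_nonneg ?_ hpos.le
    linarith [sum_nonneg fun a (_ : a ∈ univ) => hv a]
  have hpointwise : ∀ a, |u a / s - (u + v) a| ≤ u a * ((1 - s) / s) + v a := by
    intro a
    have hdiff : u a / s - (u + v) a = u a * ((1 - s) / s) - v a := by
      simp only [Pi.add_apply]
      field_simp
      ring
    rw [hdiff, abs_le]
    constructor <;> nlinarith [hu a, hv a]
  unfold statDist
  calc (∑ a, |u a / s - (u + v) a|) / 2 ≤ (∑ a, (u a * ((1 - s) / s) + v a)) / 2 := by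
        gcongr with a
        exact hpointwise a
    _ = ∑ a, v a := by
        rw [sum_add_distrib, ← sum_mul]
        change (s * ((1 - s) / s) + _) / 2 = _
        field_simp
        linarith

end Distributions

section Conditioning

variable {Ω α : Type*} [DecidableEq α]

def marginalOn (P : Ω → ℝ) (X : Ω → α) (S : Finset Ω) (a : α) : ℝ :=
  ∑ ω ∈ S.filter (fun ω => X ω = a), P ω

lemma marginalOn_nonneg {P : Ω → ℝ} (hP : ∀ ω, 0 ≤ P ω) (X : Ω → α) (S : Finset Ω) (a : α) :
    0 ≤ marginalOn P X S a :=
  sum_nonneg fun ω _ => hP ω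

lemma sum_marginalOn [Fintype α] (P : Ω → ℝ) (X : Ω → α) (S : Finset Ω) :
    ∑ a, marginalOn P X S a = ∑ ω ∈ S, P ω :=
  sum_fiberwise S X P

lemma marginalOn_add_marginalOn_compl [Fintype Ω] [DecidableEq Ω] (P : Ω → ℝ) (X : Ω → α)
    (T : Finset Ω) : marginalOn P X T + marginalOn P X Tᶜ = marginalOn P X univ := by
  ext a
  rw [Pi.add_apply, marginalOn, marginalOn, marginalOn, ← sum_union
    (disjoint_filter_filter disjoint_compl_right), ← filter_union, union_compl]

lemma statDist_cond_marginalOn_le [Fintype Ω] [Fintype α] {P : Ω → ℝ}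
    (hP : (∀ ω, 0 ≤ P ω) ∧ ∑ ω, P ω = 1) (X : Ω → α) {T : Finset Ω} (hT : 0 < ∑ ω ∈ T, P ω) :
    statDist (fun a => marginalOn P X T a / ∑ ω ∈ T, P ω) (marginalOn P X univ)
      ≤ 1 - ∑ ω ∈ T, P ω := by
  classical
  have hsplit := sum_add_sum_compl T P
  have h := statDist_div_sum_le (marginalOn_nonneg hP.1 X T) (marginalOn_nonneg hP.1 X Tᶜ)
    (by rw [sum_marginalOn, sum_marginalOn, hsplit, hP.2]) (by rwa [sum_marginalOn])
  rw [sum_marginalOn, sum_marginalOn, marginalOn_add_marginalOn_compl] at h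
  linarith [hP.2]

end Conditioning

theorem smoothMinEntropy_cond_le_general
    {Ω α : Type*} [Fintype Ω] [Fintype α] [DecidableEq α]
    (P : Ω → ℝ) (hP : (∀ ω, 0 ≤ P ω) ∧ ∑ ω, P ω = 1)
    (X : Ω → α) (T : Finset Ω) (δ ε : ℝ)
    (hδ : 0 ≤ δ) (hεδ : 2 * δ ≤ ε)
    (hT : 1 - δ ≤ ∑ ω ∈ T, P ω) (hδ1 : 0 < 1 - δ) :
    smoothMinEntropy (ε - 2 * δ)
        (fun a => (∑ ω ∈ T.filter (fun ω => X ω = a), P ω) / ∑ ω ∈ T, P ω)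
      ≤ smoothMinEntropy ε
        (fun a => ∑ ω ∈ Finset.univ.filter (fun ω => X ω = a), P ω) := by
  change smoothMinEntropy (ε - 2 * δ) (fun a => marginalOn P X T a / ∑ ω ∈ T, P ω)
    ≤ smoothMinEntropy ε (marginalOn P X univ)
  have hpos : 0 < ∑ ω ∈ T, P ω := hδ1.trans_le hT
  have hcond : IsDist fun a => marginalOn P X T a / ∑ ω ∈ T, P ω := by
    simpa only [sum_marginalOn] using
      isDist_div_sum (marginalOn_nonneg hP.1 X T) (by rwa [sum_marginalOn])
  have hdist := statDist_cond_marginalOn_le hP X hpos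
  exact smoothMinEntropy_le_of_statDist_le hcond (by linarith) (by linarith)

/-- Conditioning on an event `T` of probability at least `1 - δ` decreases the
`(ε - 2δ)`-smooth min-entropy of the conditioned distribution below the
`ε`-smooth min-entropy of the original distribution. -/
theorem smoothMinEntropy_cond_le
    {Ω α : Type*} [Fintype Ω] [Fintype α] [DecidableEq α]
    (P : Ω → ℝ) (hP : (∀ ω, 0 ≤ P ω) ∧ ∑ ω, P ω = 1)
    (X : Ω → α) (T : Finset Ω) (δ ε : ℝ)
    (hδ : 0 ≤ δ) (hεδ : 2 * δ ≤ ε) (hε : ε ≤ 1)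
    (hT : 1 - δ ≤ ∑ ω ∈ T, P ω) (hδ1 : 0 < 1 - δ) :
    smoothMinEntropy (ε - 2 * δ)
        (fun a => (∑ ω ∈ T.filter (fun ω => X ω = a), P ω) / ∑ ω ∈ T, P ω)
      ≤ smoothMinEntropy ε
        (fun a => ∑ ω ∈ Finset.univ.filter (fun ω => X ω = a), P ω) :=
  smoothMinEntropy_cond_le_general P hP X T δ ε hδ hεδ hT hδ1
end

section
/- Let α be a finite type, p a probability distribution on α, and ε ∈ [0,1). Then H∞^ε(p) ≤ H₀(p) − log₂(1 − ε). Equivalently, every probability distribution q on α with statistical distance ‖q − p‖ ≤ ε satisfies H∞(q) ≤ log₂(card {a : p a ≠ 0}) − log₂(1 − ε). -/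
open Finset
open scoped Classical

/-- Max-entropy `H₀(p) = log₂ |supp p|`. -/
noncomputable def maxEntropy {α : Type*} [Fintype α] (p : α → ℝ) : ℝ :=
  Real.logb 2 ((Finset.univ.filter fun a => p a ≠ 0).card)

/-!
A distribution `q` within statistical distance `ε` of `p` keeps mass at least `1 - ε` on the
support of `p`, so some point of that support carries `q`-mass at least `(1 - ε) / |supp p|`.
-/

section

variable {α : Type*} [Fintype α]

/-- As the total masses agree, the excess of `p` over `q` on `S` equals that of `q` over `p`
on `Sᶜ`, and together they are at most `∑ |q - p|`. -/
theorem sum_sub_sum_le_statDist {p q : α → ℝ} (hpq : ∑ a, p a = ∑ a, q a) (S : Finset α) :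
    ∑ a ∈ S, p a - ∑ a ∈ S, q a ≤ statDist q p := by
  have hS : ∑ a ∈ S, p a - ∑ a ∈ S, q a ≤ ∑ a ∈ S, |q a - p a| := by
    rw [← sum_sub_distrib]
    exact sum_le_sum fun a _ => abs_sub_comm (q a) (p a) ▸ le_abs_self _
  have hSc : ∑ a ∈ Sᶜ, q a - ∑ a ∈ Sᶜ, p a ≤ ∑ a ∈ Sᶜ, |q a - p a| := by
    rw [← sum_sub_distrib]
    exact sum_le_sum fun a _ => le_abs_self _
  have hp_split := sum_add_sum_compl S p
  have hq_split := sum_add_sum_compl S q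
  have habs_split := sum_add_sum_compl S fun a => |q a - p a|
  rw [statDist]
  linarith

theorem sum_le_card_mul_iSup (q : α → ℝ) (S : Finset α) :
    ∑ a ∈ S, q a ≤ #S * ⨆ a, q a := by
  rw [← nsmul_eq_mul]
  exact sum_le_card_nsmul S q _ fun a _ => le_ciSup (Set.finite_range q).bddAbove a

theorem minEntropy_le_neg_logb {q : α → ℝ} {c : ℝ} (hc : 0 < c) (h : c ≤ ⨆ a, q a) :
    minEntropy q ≤ -Real.logb 2 c :=
  neg_le_neg (Real.logb_le_logb_of_le one_lt_two hc h)

theorem minEntropy_le_of_statDist_le {p q : α → ℝ} (hp : IsDist p) (hq : IsDist q) {ε : ℝ}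
    (hε : ε < 1) (hd : statDist q p ≤ ε) :
    minEntropy q ≤ Real.logb 2 #{a | p a ≠ 0} - Real.logb 2 (1 - ε) := by
  set S : Finset α := {a | p a ≠ 0}
  have hpS : ∑ a ∈ S, p a = 1 := by rw [sum_filter_ne_zero, hp.2]
  have hmass : 1 - ε ≤ #S * ⨆ a, q a := by
    have hdev := sum_sub_sum_le_statDist (hp.2.trans hq.2.symm) S
    linarith [sum_le_card_mul_iSup q S]
  have hcard : (0 : ℝ) < #S := by
    refine (Nat.cast_nonneg _).lt_of_ne fun h => ?_
    rw [← h, zero_mul] at hmass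
    linarith
  calc minEntropy q ≤ -Real.logb 2 ((1 - ε) / #S) :=
        minEntropy_le_neg_logb (by bound) ((div_le_iff₀' hcard).2 hmass)
    _ = Real.logb 2 #S - Real.logb 2 (1 - ε) := by
        rw [Real.logb_div (by linarith) hcard.ne']
        ring

end

/-- The `ε`-smooth min-entropy is at most `H₀(p) - log₂(1 - ε)`; equivalently,
every distribution `q` within statistical distance `ε` of `p` has min-entropy at
most `log₂ |supp p| - log₂ (1 - ε)`. -/
theorem smoothMinEntropy_le_maxEntropy
    {α : Type*} [Fintype α] (p : α → ℝ) (hp : IsDist p)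
    (ε : ℝ) (hε0 : 0 ≤ ε) (hε1 : ε < 1) :
    smoothMinEntropy ε p ≤ maxEntropy p - Real.logb 2 (1 - ε) ∧
    ∀ q : α → ℝ, IsDist q → statDist q p ≤ ε →
      minEntropy q ≤ Real.logb 2 ((Finset.univ.filter fun a => p a ≠ 0).card)
        - Real.logb 2 (1 - ε) := by
  have hbound : ∀ q : α → ℝ, IsDist q → statDist q p ≤ ε →
      minEntropy q ≤ maxEntropy p - Real.logb 2 (1 - ε) :=
    fun q hq hd => minEntropy_le_of_statDist_le hp hq hε1 hd
  -- `p` itself lies in the smoothing ball, so `csSup_le` applies and `sSup ∅ = 0` never arises.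
  refine ⟨csSup_le ⟨_, p, hp, ?_, rfl⟩ ?_, hbound⟩
  · simpa [statDist] using hε0
  · rintro _ ⟨q, hq, hd, rfl⟩
    exact hbound q hq hd
end

section
/- Let α be a finite type with card α = n ≥ 1, let p be a probability distribution on α, let K ≥ 1 be a natural number, and let μ be the product probability measure on Fin K → α in which each coordinate is independently distributed according to p. For ω : Fin K → α define the empirical distribution q̂_ω(a) = (card {k ∈ Fin K : ω k = a})/K. Then for every η > 0, μ({ω : (1/2)·∑_{a} |q̂_ω a − p a| > η}) ≤ 2n·exp(−8η²K/n²). In particular, for K = Ω((n²/η²)·log(n/ξ)), with probability at least 1 − ξ the empirical distribution of K i.i.d. samples from p is within statistical distance η of p. -/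
/-!
If the empirical distribution is at statistical distance more than `η` from `p`, then by
pigeonhole some atom `a` has `|q̂ a - p a| ≥ 2η/n`, i.e. the sum of the `K` i.i.d. centred
indicators `1[ω k = a] - p a` has absolute value at least `2Kη/n`. Hoeffding's inequality for
these `[0, 1]`-valued summands bounds this by `2 exp(-8η²K/n²)`, and a union bound over the `n`
atoms finishes the proof.
-/

open Finset MeasureTheory ProbabilityTheory Real

section Hoeffding

variable {ι β : Type*} [Fintype ι] [MeasurableSpace β] (ν : Measure β) [IsProbabilityMeasure ν]
  {Y : β → ℝ} {lo hi ε : ℝ}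

lemma measureReal_sum_sub_integral_ge_le (hY : AEMeasurable Y ν)
    (hb : ∀ᵐ b ∂ν, Y b ∈ Set.Icc lo hi) (hε : 0 ≤ ε) :
    (Measure.pi fun _ : ι ↦ ν).real {ω | ε ≤ ∑ i, (Y (ω i) - ν[Y])}
      ≤ exp (-2 * ε ^ 2 / (Fintype.card ι * (hi - lo) ^ 2)) := by
  have hindep := iIndepFun_pi (μ := fun _ : ι ↦ ν) (X := fun _ b ↦ Y b - ν[Y])
    fun _ ↦ hY.sub_const _
  have hsubG (i : ι) : HasSubgaussianMGF (fun ω : ι → β ↦ Y (ω i) - ν[Y])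
      ((‖hi - lo‖₊ / 2) ^ 2) (Measure.pi fun _ : ι ↦ ν) := by
    refine HasSubgaussianMGF.of_map (X := fun b ↦ Y b - ν[Y]) (Y := fun ω : ι → β ↦ ω i)
      (measurable_pi_apply i).aemeasurable ?_
    rw [(measurePreserving_eval (fun _ : ι ↦ ν) i).map_eq]
    exact hasSubgaussianMGF_of_mem_Icc hY hb
  refine (HasSubgaussianMGF.measure_sum_ge_le_of_iIndepFun hindep (fun i _ ↦ hsubG i) hε).trans_eq ?_
  congr 1
  simp only [Finset.sum_const, Finset.card_univ, nsmul_eq_mul]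
  push_cast
  rw [Real.norm_eq_abs, div_pow, sq_abs,
    show 2 * (Fintype.card ι * ((hi - lo) ^ 2 / 2 ^ 2)) = Fintype.card ι * (hi - lo) ^ 2 / 2 by ring,
    div_div_eq_mul_div]
  ring

lemma measureReal_abs_sum_sub_integral_ge_le (hY : AEMeasurable Y ν)
    (hb : ∀ᵐ b ∂ν, Y b ∈ Set.Icc lo hi) (hε : 0 ≤ ε) :
    (Measure.pi fun _ : ι ↦ ν).real {ω | ε ≤ |∑ i, (Y (ω i) - ν[Y])|}
      ≤ 2 * exp (-2 * ε ^ 2 / (Fintype.card ι * (hi - lo) ^ 2)) := by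
  have hneg := measureReal_sum_sub_integral_ge_le (ι := ι) ν hY.neg (lo := -hi) (hi := -lo)
    (hb.mono fun b hb ↦ ⟨neg_le_neg hb.2, neg_le_neg hb.1⟩) hε
  have hsplit : {ω : ι → β | ε ≤ |∑ i, (Y (ω i) - ν[Y])|} ⊆
      {ω | ε ≤ ∑ i, (Y (ω i) - ν[Y])} ∪ {ω | ε ≤ ∑ i, ((-Y) (ω i) - ν[-Y])} := by
    intro ω hω
    simp only [Set.mem_ofPred_eq, Pi.neg_apply, integral_neg, Set.mem_union] at hω ⊢
    rw [show ∑ i, (-Y (ω i) - -ν[Y]) = -∑ i, (Y (ω i) - ν[Y]) by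
      rw [← Finset.sum_neg_distrib]; exact Finset.sum_congr rfl fun _ _ ↦ by ring]
    exact le_abs.1 hω
  calc _ ≤ _ := measureReal_mono hsplit
    _ ≤ _ := measureReal_union_le _ _
    _ ≤ _ := add_le_add (measureReal_sum_sub_integral_ge_le ν hY hb hε) hneg
    _ = _ := by ring_nf

end Hoeffding

lemma measureReal_pi_finset {ι α : Type*} [Fintype ι] [MeasurableSpace α]
    [MeasurableSingletonClass α] (ν : Measure α) [IsFiniteMeasure ν] (S : Finset (ι → α)) :
    (Measure.pi fun _ : ι ↦ ν).real S = ∑ ω ∈ S, ∏ i, ν.real {ω i} := by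
  rw [← sum_measureReal_singleton]
  refine Finset.sum_congr rfl fun ω _ ↦ ?_
  simp [measureReal_def, ENNReal.toReal_prod]

lemma exists_isProbabilityMeasure_measureReal_singleton {α : Type*} [Fintype α]
    [MeasurableSpace α] [MeasurableSingletonClass α] {p : α → ℝ} (hp0 : ∀ a, 0 ≤ p a)
    (hp1 : ∑ a, p a = 1) :
    ∃ ν : Measure α, IsProbabilityMeasure ν ∧ ∀ a, ν.real {a} = p a := by
  have hsum : ∑ a, ENNReal.ofReal (p a) = 1 := by
    rw [← ENNReal.ofReal_sum_of_nonneg fun a _ ↦ hp0 a, hp1, ENNReal.ofReal_one]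
  refine ⟨(PMF.ofFintype _ hsum).toMeasure, inferInstance, fun a ↦ ?_⟩
  rw [measureReal_def, PMF.toMeasure_apply_singleton _ _ (measurableSet_singleton a),
    PMF.ofFintype_apply, ENNReal.toReal_ofReal (hp0 a)]

lemma exists_le_abs_of_lt_half_sum_abs {α : Type*} [Fintype α] [Nonempty α] {x : α → ℝ}
    {η : ℝ} (h : η < 1 / 2 * ∑ a, |x a|) : ∃ a, 2 * η / Fintype.card α ≤ |x a| := by
  obtain ⟨a, -, ha⟩ := Finset.exists_le_of_sum_le Finset.univ_nonempty
    (f := fun _ ↦ 2 * η / Fintype.card α) (g := fun a ↦ |x a|) <| by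
      rw [Finset.sum_const, Finset.card_univ, nsmul_eq_mul,
        mul_div_cancel₀ _ (Nat.cast_ne_zero.2 Fintype.card_ne_zero)]
      linarith
  exact ⟨a, ha⟩

lemma sum_indicator_singleton_sub {α : Type*} [DecidableEq α] {K : ℕ} (ω : Fin K → α) (a : α)
    (x : ℝ) : ∑ k, (({a} : Set α).indicator 1 (ω k) - x) = #{k | ω k = a} - K * x := by
  simp [Set.indicator_apply, Finset.sum_sub_distrib]

lemma exists_le_abs_sum_indicator_sub {α : Type*} [Fintype α] [Nonempty α] [DecidableEq α]
    {K : ℕ} (hK : 0 < K) {p : α → ℝ} {η : ℝ} {ω : Fin K → α}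
    (h : η < 1 / 2 * ∑ a, |(#{k | ω k = a} : ℝ) / K - p a|) :
    ∃ a, K * (2 * η / Fintype.card α) ≤ |∑ k, (({a} : Set α).indicator 1 (ω k) - p a)| := by
  have hKpos : (0 : ℝ) < K := by exact_mod_cast hK
  obtain ⟨a, ha⟩ := exists_le_abs_of_lt_half_sum_abs h
  refine ⟨a, ?_⟩
  calc _ ≤ K * |(#{k | ω k = a} : ℝ) / K - p a| := by gcongr
    _ = _ := by
      rw [sum_indicator_singleton_sub, ← abs_of_pos hKpos, ← abs_mul, abs_of_pos hKpos, mul_sub,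
        mul_div_cancel₀ _ hKpos.ne']

/-- Concentration of the empirical distribution of `K` i.i.d. samples from a
distribution `p` on a finite alphabet of size `n`: the probability (under the
product measure, with mass function `ω ↦ ∏ k, p (ω k)`) that the empirical
distribution is at statistical distance more than `η` from `p` is at most
`2n·exp(−8η²K/n²)`. -/
theorem empirical_distribution_concentration
    {α : Type*} [Fintype α] [DecidableEq α] (n : ℕ) (hn : Fintype.card α = n)
    (hn1 : 1 ≤ n) (p : α → ℝ) (hp0 : ∀ a, 0 ≤ p a) (hp1 : ∑ a, p a = 1)
    (K : ℕ) (hK : 1 ≤ K) (η : ℝ) (hη : 0 < η) :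
    ∑ ω ∈ Finset.univ.filter (fun ω : Fin K → α =>
        η < (1 / 2 : ℝ) * ∑ a : α,
          |((Finset.univ.filter fun k : Fin K => ω k = a).card : ℝ) / K - p a|),
      ∏ k : Fin K, p (ω k)
    ≤ 2 * n * Real.exp (-(8 * η ^ 2 * K) / n ^ 2) := by
  let _ : MeasurableSpace α := ⊤
  have : Nonempty α := Fintype.card_pos_iff.1 (hn ▸ hn1)
  obtain ⟨ν, _, hν⟩ := exists_isProbabilityMeasure_measureReal_singleton hp0 hp1
  have hmean (a : α) : ν[({a} : Set α).indicator 1] = p a := by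
    rw [integral_indicator_one (measurableSet_singleton a), hν]
  rw [Finset.sum_congr rfl fun ω _ ↦ Finset.prod_congr rfl fun k _ ↦ (hν (ω k)).symm,
    ← measureReal_pi_finset]
  have hnpos : (0 : ℝ) < n := by exact_mod_cast hn1
  calc _ ≤ (Measure.pi fun _ ↦ ν).real (⋃ a, {ω | K * (2 * η / n) ≤
          |∑ k, (({a} : Set α).indicator 1 (ω k) - ν[({a} : Set α).indicator 1])|}) :=
        measureReal_mono fun ω hω ↦ by
          obtain ⟨a, ha⟩ := exists_le_abs_sum_indicator_sub hK (Finset.mem_filter.1 hω).2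
          exact Set.mem_iUnion.2 ⟨a, by rwa [Set.mem_ofPred_eq, hmean, ← hn]⟩
    _ ≤ _ := measureReal_iUnion_fintype_le _
    _ ≤ ∑ _a : α, 2 * exp (-2 * (K * (2 * η / n)) ^ 2 / (Fintype.card (Fin K) * (1 - 0) ^ 2)) :=
        Finset.sum_le_sum fun a _ ↦ measureReal_abs_sum_sub_integral_ge_le ν
          (measurable_of_countable _).aemeasurable
          (ae_of_all _ fun b ↦ by rw [Set.indicator_apply]; split_ifs <;> simp) (by positivity)
    _ = _ := by
      rw [Finset.sum_const, Finset.card_univ, hn, nsmul_eq_mul, Fintype.card_fin,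
        show -2 * (K * (2 * η / n)) ^ 2 / (K * (1 - 0) ^ 2) = -(8 * η ^ 2 * K) / n ^ 2 by
          field_simp; ring]
      ring
end

section
/- The classical value of the Magic Square game is 17/18: for every pair of functions f : Fin 6 → (ZMod 2)³ and g : Fin 3 × Fin 3 → ZMod 2, the number of pairs (x, k) ∈ Fin 6 × Fin 3 for which the outputs a = f x and b = g (y(x,k)) satisfy the winning condition is at most 17, and there exist f, g achieving exactly 17 of the 18 pairs. -/
open Finset

/-- The `k`-th cell of the line denoted by `x ∈ Fin 6`: for `x < 3`, row `x`;
for `x ≥ 3`, column `x - 3`. -/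
def msCell (x : Fin 6) (k : Fin 3) : Fin 3 × Fin 3 :=
  if h : (x : ℕ) < 3 then (⟨x, h⟩, k)
  else (k, ⟨(x : ℕ) - 3, by have := x.isLt; omega⟩)

/-- The winning condition of the Magic Square game on Alice's input `x`,
position `k` of Bob's cell within the line `x`, Alice's assignment `a` to the
line, and Bob's bit `b`. -/
abbrev msWin (x : Fin 6) (k : Fin 3) (a : Fin 3 → ZMod 2) (b : ZMod 2) : Prop :=
  (a 0 + a 1 + a 2 = if (x : ℕ) < 3 then 0 else 1) ∧ a k = b

/-!
Bob's answers fill a 3×3 grid of bits. If the players won on every pair, Alice's answers would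
equal Bob's cells, so every row of the grid would sum to 0 and every column to 1 in `ZMod 2`.
Summing the whole grid by rows and by columns then gives `0 = 3 = 1`. Hence some pair is lost, and
a grid whose rows sum to 0 and whose columns sum to 1 except the last one shows that losing a
single pair is achievable.
-/

theorem even_card_of_sum_row_eq_zero_of_sum_col_eq_one {ι κ : Type*} [Fintype ι] [Fintype κ]
    (g : ι → κ → ZMod 2) (hrow : ∀ i, ∑ j, g i j = 0) (hcol : ∀ j, ∑ i, g i j = 1) :
    Even (Fintype.card κ) := by
  rw [← ZMod.natCast_eq_zero_iff_even]
  calc (Fintype.card κ : ZMod 2) = ∑ j, ∑ i, g i j := by simp [hcol]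
    _ = ∑ i, ∑ j, g i j := Finset.sum_comm
    _ = 0 := by simp [hrow]

theorem msCell_castAdd (i k : Fin 3) : msCell (Fin.castAdd 3 i) k = (i, k) := by
  simp [msCell]

theorem msCell_natAdd (j k : Fin 3) : msCell (Fin.natAdd 3 j) k = (k, j) := by
  simp [msCell]

theorem sum_eq_of_forall_msWin {x : Fin 6} {a b : Fin 3 → ZMod 2}
    (h : ∀ k, msWin x k a (b k)) : ∑ k, b k = if (x : ℕ) < 3 then 0 else 1 := by
  have hba : ∀ k, b k = a k := fun k => (h k).2.symm
  simpa only [Fin.sum_univ_three, hba] using (h 0).1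

theorem not_forall_msWin (f : Fin 6 → Fin 3 → ZMod 2) (g : Fin 3 × Fin 3 → ZMod 2) :
    ¬ ∀ x k, msWin x k (f x) (g (msCell x k)) := by
  intro hwin
  have hline x := sum_eq_of_forall_msWin (hwin x)
  have hodd : ¬ Even (Fintype.card (Fin 3)) := by decide
  refine hodd (even_card_of_sum_row_eq_zero_of_sum_col_eq_one (fun i j => g (i, j)) ?_ ?_)
  · intro i
    simpa only [msCell_castAdd, Fin.val_castAdd, i.isLt, if_true] using hline (Fin.castAdd 3 i)
  · intro j
    have hcolumn := hline (Fin.natAdd 3 j)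
    simp only [msCell_natAdd] at hcolumn
    simpa using hcolumn

def msBob (c : Fin 3 × Fin 3) : ZMod 2 :=
  ![![0, 0, 0], ![0, 0, 0], ![1, 1, 0]] c.1 c.2

/-- Alice copies Bob's grid, except that she flips the last cell of the last column to make its
parity odd. -/
def msAlice (x : Fin 6) (k : Fin 3) : ZMod 2 :=
  msBob (msCell x k) + if (x, k) = (5, 2) then 1 else 0

/-- The classical value of the Magic Square game is 17/18: every deterministic
strategy `(f, g)` wins on at most 17 of the 18 equally likely pairs `(x, k)`,
and some strategy wins on exactly 17 of them. -/
theorem magic_square_classical_value :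
    (∀ (f : Fin 6 → Fin 3 → ZMod 2) (g : Fin 3 × Fin 3 → ZMod 2),
      (Finset.univ.filter fun xk : Fin 6 × Fin 3 =>
          msWin xk.1 xk.2 (f xk.1) (g (msCell xk.1 xk.2))).card ≤ 17) ∧
    (∃ (f : Fin 6 → Fin 3 → ZMod 2) (g : Fin 3 × Fin 3 → ZMod 2),
      (Finset.univ.filter fun xk : Fin 6 × Fin 3 =>
          msWin xk.1 xk.2 (f xk.1) (g (msCell xk.1 xk.2))).card = 17) := by
  refine ⟨fun f g => ?_, msAlice, msBob, by decide⟩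
  have hlost : ∃ xk ∈ (univ : Finset (Fin 6 × Fin 3)),
      ¬ msWin xk.1 xk.2 (f xk.1) (g (msCell xk.1 xk.2)) := by
    simpa using not_forall_msWin f g
  have hlt := Finset.card_lt_card (Finset.filter_ssubset.2 hlost)
  simpa using Nat.le_of_lt_succ hlt
end

section
/- Any non-signaling strategy that wins the CHSH game with probability strictly greater than 3/4 must generate randomness: if p is a non-signaling strategy for the CHSH game with winning probability > 3/4, then there exist inputs x, y ∈ Bool and outputs a, b ∈ Bool such that 0 < p x y a b < 1. -/
/-!
If no probability lies strictly between 0 and 1, every input pair has a single certain output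
pair, and non-signaling forces Alice's certain output to depend on `x` alone and Bob's on `y`
alone. Such a deterministic local strategy wins on at most three of the four input pairs,
since `xor (α x) (β y)` summed (mod 2) over all `(x, y)` is `0`, while `x && y` sums to `1`.
-/

open Finset

theorem exists_eq_ite_of_sum_eq_one {ι : Type*} [Fintype ι] [DecidableEq ι] {q : ι → ℝ}
    (h01 : ∀ i, q i = 0 ∨ q i = 1) (hsum : ∑ i, q i = 1) :
    ∃ i₀, ∀ i, q i = if i = i₀ then 1 else 0 := by
  obtain ⟨i₀, -, hi₀⟩ := exists_ne_zero_of_sum_ne_zero (hsum.trans_ne one_ne_zero)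
  have hq₀ : q i₀ = 1 := (h01 i₀).resolve_left hi₀
  have hrest : ∑ i ∈ univ.erase i₀, q i = 0 := by
    rw [← add_sum_erase _ _ (mem_univ i₀), hq₀] at hsum
    linarith
  have hnonneg : ∀ i, 0 ≤ q i := fun i => (h01 i).elim ge_of_eq fun h => h ▸ zero_le_one
  refine ⟨i₀, fun i => ?_⟩
  split_ifs with hi
  · rwa [hi]
  · exact (sum_eq_zero_iff_of_nonneg fun j _ => hnonneg j).1 hrest i (mem_erase.2 ⟨hi, mem_univ i⟩)

theorem exists_local_deterministic_of_nonsignaling {X Y A B : Type*} [Nonempty X] [Nonempty Y]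
    [Fintype A] [Fintype B] [DecidableEq A] [DecidableEq B] (p : X → Y → A → B → ℝ)
    (h01 : ∀ x y a b, p x y a b = 0 ∨ p x y a b = 1)
    (hsum : ∀ x y, ∑ a, ∑ b, p x y a b = 1)
    (hnsA : ∀ x a y y', ∑ b, p x y a b = ∑ b, p x y' a b)
    (hnsB : ∀ y b x x', ∑ a, p x y a b = ∑ a, p x' y a b) :
    ∃ (α : X → A) (β : Y → B), ∀ x y a b, p x y a b = if a = α x ∧ b = β y then 1 else 0 := by
  choose f hf using fun x y => exists_eq_ite_of_sum_eq_one
    (q := fun ab : A × B => p x y ab.1 ab.2) (fun ab => h01 x y ab.1 ab.2)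
    (by rw [Fintype.sum_prod_type]; exact hsum x y)
  have hp : ∀ x y a b, p x y a b = if a = (f x y).1 ∧ b = (f x y).2 then 1 else 0 := by
    intro x y a b
    simp only [hf x y (a, b), Prod.ext_iff]
  have hα : ∀ x y y', (f x y).1 = (f x y').1 := fun x y y' => by
    by_contra hne
    simpa [hp, ite_and, hne] using hnsA x (f x y).1 y y'
  have hβ : ∀ y x x', (f x y).2 = (f x' y).2 := fun y x x' => by
    by_contra hne
    simpa [hp, ite_and, hne] using hnsB y (f x y).2 x x'
  refine ⟨fun x => (f x (Classical.arbitrary Y)).1, fun y => (f (Classical.arbitrary X) y).2,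
    fun x y a b => ?_⟩
  rw [hp, hα x y, hβ y x]

theorem sum_sum_ite_ite_and_eq {A B M : Type*} [Fintype A] [Fintype B] [DecidableEq A]
    [DecidableEq B] [AddCommMonoidWithOne M] (W : A → B → Prop) [DecidableRel W] (a₀ : A)
    (b₀ : B) :
    ∑ a, ∑ b, (if W a b then (if a = a₀ ∧ b = b₀ then 1 else 0 : M) else 0) =
      if W a₀ b₀ then 1 else 0 := by
  rw [Fintype.sum_eq_single a₀ fun a ha => by simp [ha],
    Fintype.sum_eq_single b₀ fun b hb => by simp [hb]]
  simp

theorem chsh_deterministic_wins_le_three (α β : Bool → Bool) :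
    ∑ x : Bool, ∑ y : Bool, (if xor (α x) (β y) = (x && y) then 1 else 0 : ℝ) ≤ 3 := by
  simp only [Fintype.sum_bool]
  generalize α true = a₁, α false = a₀, β true = b₁, β false = b₀
  cases a₀ <;> cases a₁ <;> cases b₀ <;> cases b₁ <;> norm_num

/-- Any non-signaling strategy winning the CHSH game with probability strictly
greater than the classical value 3/4 must generate randomness: some output pair
on some input pair has probability strictly between 0 and 1. -/
theorem chsh_above_classical_generates_randomness
    (p : Bool → Bool → Bool → Bool → ℝ)
    (hpos : ∀ x y a b, 0 ≤ p x y a b)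
    (hsum : ∀ x y, ∑ a : Bool, ∑ b : Bool, p x y a b = 1)
    (hnsA : ∀ x a y y', ∑ b : Bool, p x y a b = ∑ b : Bool, p x y' a b)
    (hnsB : ∀ y b x x', ∑ a : Bool, p x y a b = ∑ a : Bool, p x' y a b)
    (hwin : (3 / 4 : ℝ) < (1 / 4 : ℝ) * ∑ x : Bool, ∑ y : Bool, ∑ a : Bool, ∑ b : Bool,
      (if xor a b = (x && y) then p x y a b else 0)) :
    ∃ x y a b, 0 < p x y a b ∧ p x y a b < 1 := by
  by_contra! hcon
  have hle : ∀ x y a b, p x y a b ≤ 1 := fun x y a b =>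
    (single_le_sum (fun b' _ => hpos x y a b') (mem_univ b)).trans <|
      (single_le_sum (fun a' _ => sum_nonneg fun b' _ => hpos x y a' b') (mem_univ a)).trans
        (hsum x y).le
  have h01 : ∀ x y a b, p x y a b = 0 ∨ p x y a b = 1 := fun x y a b =>
    (hpos x y a b).eq_or_lt.imp Eq.symm fun h => le_antisymm (hle x y a b) (hcon x y a b h)
  obtain ⟨α, β, hp⟩ := exists_local_deterministic_of_nonsignaling p h01 hsum hnsA hnsB
  simp only [hp, sum_sum_ite_ite_and_eq] at hwin
  linarith [chsh_deterministic_wins_le_three α β]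
end
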